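/- arXiv:2101.06531 — 3 statements merged into one kernel-verified Lean document; each statement's English description precedes it below -/
import Mathlib

section
/- Let S_{k,delta} be the set of symmetric matrices P in [0,1]^{k x k} with P_{ii} > delta + max_{j != i} P_{ij} for all i. Let Z_{n,k} be the set of assignments of n nodes into k communities each of size at least 2, represented as n x k binary matrices with exactly one 1 per row and each column sum at least 2. Define Theta_{k,delta} = { T(Z P Z^T) : P in S_{k,delta}, Z in Z_{n,k} } where T(M) = M - diag(M). Then for k != k', Theta_{k,delta} ∩ Theta_{k',delta'} = ∅ for any delta, delta' >= 0. -/
/-- Diagonally dominant community-wise connectivity matrices: symmetric `P ∈ [0,1]^{k×k}`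
with `P_{ii} > δ + max_{j ≠ i} P_{ij}` for all `i`. -/
def Sset (k : ℕ) (δ : ℝ) : Set (Matrix (Fin k) (Fin k) ℝ) :=
  {P | P.IsSymm ∧ (∀ a b, P a b ∈ Set.Icc (0:ℝ) 1) ∧ ∀ a b, b ≠ a → δ + P a b < P a a}

/-- Membership assignments of `n` nodes into `k` communities, each of size at least 2. -/
def IsAssign {n k : ℕ} (Z : Fin n → Fin k) : Prop :=
  ∀ a : Fin k, 2 ≤ (Finset.univ.filter (fun i => Z i = a)).card

/-- Node-wise connectivity matrix `T(Z P Zᵀ)` where `T(M) = M - diag(M)`. -/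
def nodeMat {n k : ℕ} (Z : Fin n → Fin k) (P : Matrix (Fin k) (Fin k) ℝ) :
    Matrix (Fin n) (Fin n) ℝ :=
  Matrix.of fun i j => if i = j then 0 else P (Z i) (Z j)

/-- Parameter space of diagonally dominant SBM node-wise connectivity matrices. -/
def ThetaSet (n k : ℕ) (δ : ℝ) : Set (Matrix (Fin n) (Fin n) ℝ) :=
  {θ | ∃ P ∈ Sset k δ, ∃ Z : Fin n → Fin k, IsAssign Z ∧ θ = nodeMat Z P}

lemma assign_exists_ne {n k : ℕ} {Z : Fin n → Fin k} (hZ : IsAssign Z) (i : Fin n) :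
    ∃ i' : Fin n, i' ≠ i ∧ Z i' = Z i := by
  have h := hZ (Z i)
  obtain ⟨a, ha, b, hb, hab⟩ := Finset.one_lt_card.mp (lt_of_lt_of_le one_lt_two h)
  simp only [Finset.mem_filter] at ha hb
  by_cases hai : a = i
  · exact ⟨b, by rw [← hai]; exact fun h => hab h.symm, hb.2⟩
  · exact ⟨a, hai, ha.2⟩

lemma assign_surj {n k : ℕ} {Z : Fin n → Fin k} (hZ : IsAssign Z) : Function.Surjective Z := by
  intro a
  have h := hZ a
  obtain ⟨i, hi⟩ := Finset.card_pos.mp (lt_of_lt_of_le two_pos h)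
  simp only [Finset.mem_filter] at hi
  exact ⟨i, hi.2⟩

/-- Key: the assignment's partition is recoverable from the node-wise matrix. -/
lemma key {n k : ℕ} {δ : ℝ} (hδ : 0 ≤ δ) {Z : Fin n → Fin k}
    {P : Matrix (Fin k) (Fin k) ℝ} (hP : P ∈ Sset k δ) (hZ : IsAssign Z)
    (i j : Fin n) (hij : i ≠ j) :
    Z i = Z j ↔ ∀ l, l ≠ i → nodeMat Z P i l ≤ nodeMat Z P i j := by
  obtain ⟨-, -, hdom⟩ := hP
  have hθ : ∀ l, l ≠ i → nodeMat Z P i l = P (Z i) (Z l) := by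
    intro l hl
    simp only [nodeMat, Matrix.of_apply]
    rw [if_neg (fun h : i = l => hl h.symm)]
  constructor
  · intro hzz l hl
    rw [hθ l hl, hθ j (Ne.symm hij), ← hzz]
    by_cases hc : Z l = Z i
    · rw [hc]
    · exact le_of_lt (lt_of_le_of_lt (le_add_of_nonneg_left hδ) (hdom _ _ hc))
  · intro h
    obtain ⟨i', hi', hzi'⟩ := assign_exists_ne hZ i
    have h1 := h i' hi'
    rw [hθ i' hi', hθ j (Ne.symm hij), hzi'] at h1
    by_contra hc
    have h2 := hdom (Z i) (Z j) (Ne.symm hc)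
    linarith

/-- The node-wise connectivity matrix spaces of diagonally dominant SBMs with different
community counts are disjoint: for `k ≠ k'`, `Θ_{k,δ} ∩ Θ_{k',δ'} = ∅` for any `δ, δ' ≥ 0`. -/
theorem thetaSet_disjoint (n k k' : ℕ) (δ δ' : ℝ) (hδ : 0 ≤ δ) (hδ' : 0 ≤ δ')
    (hkk : k ≠ k') : ThetaSet n k δ ∩ ThetaSet n k' δ' = ∅ := by
  ext θ
  simp only [Set.mem_inter_iff, Set.mem_empty_iff_false, iff_false, not_and]
  rintro ⟨P, hP, Z, hZ, rfl⟩ ⟨P', hP', Z', hZ', hEq⟩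
  -- the two assignments induce the same partition
  have hsame : ∀ i j : Fin n, Z i = Z j ↔ Z' i = Z' j := by
    intro i j
    by_cases hij : i = j
    · simp [hij]
    · rw [key hδ hP hZ i j hij, hEq, key hδ' hP' hZ' i j hij]
  -- build a bijection Fin k ≃ Fin k'
  have hsZ := assign_surj hZ
  have hsZ' := assign_surj hZ'
  set s := Function.surjInv hsZ with hs
  have hsec : ∀ a, Z (s a) = a := fun a => Function.surjInv_eq hsZ a
  have : Function.Bijective (fun a => Z' (s a)) := by
    constructor
    · intro a b hab
      have : Z (s a) = Z (s b) := (hsame _ _).mpr hab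
      rwa [hsec, hsec] at this
    · intro b
      obtain ⟨i, hi⟩ := hsZ' b
      refine ⟨Z i, ?_⟩
      have : Z (s (Z i)) = Z i := hsec (Z i)
      have h3 := (hsame _ _).mp this
      show Z' (s (Z i)) = b
      rw [h3, hi]
  exact hkk (by simpa using Fintype.card_of_bijective this)
end

section
/- Suppose P in S_{k,delta} with delta > 0, Z in Z_{n,k} (each community of size >= 2), and theta = T(Z P Z^T). For each node i, define C_i = { j : theta_{ij} = max_ℓ theta_{iℓ} }. Then C_i is exactly the set of nodes in the same community as node i (possibly excluding or including i depending on convention for theta_{ii} = 0; take j != i). Consequently, Z is recoverable from theta up to a permutation of community labels. -/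
/-- For a diagonally dominant SBM with gap `δ > 0` and communities of size at least 2,
for every node `i` the argmax set `C_i = {j ≠ i : θ_{ij} = max_{ℓ ≠ i} θ_{iℓ}}` is exactly
the set of nodes (other than `i`) in the same community as `i`.  Consequently the
membership assignment `Z` is recoverable from `θ = T(Z P Zᵀ)` up to a permutation of
community labels. -/
theorem argmax_recovers_community (n k : ℕ) (δ : ℝ) (hδ : 0 < δ)
    (P : Matrix (Fin k) (Fin k) ℝ) (hP : P ∈ Sset k δ)
    (Z : Fin n → Fin k) (hZ : IsAssign Z) :
    ∀ i : Fin n,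
      {j : Fin n | j ≠ i ∧ ∀ ℓ : Fin n, ℓ ≠ i → nodeMat Z P i ℓ ≤ nodeMat Z P i j}
        = {j : Fin n | j ≠ i ∧ Z j = Z i} := by
  intro i
  obtain ⟨hsymm, hrange, hdom⟩ := hP
  -- there is another node in the same community as i
  obtain ⟨j₀, hj₀ne, hj₀⟩ : ∃ j₀, j₀ ≠ i ∧ Z j₀ = Z i := by
    have h2 := hZ (Z i)
    have : ∃ x ∈ Finset.univ.filter (fun m => Z m = Z i), x ≠ i := by
      by_contra h
      push_neg at h
      have : (Finset.univ.filter (fun m => Z m = Z i)) ⊆ {i} := by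
        intro x hx; simp [h x hx]
      have := Finset.card_le_card this
      simp at this; omega
    obtain ⟨x, hx, hxne⟩ := this
    exact ⟨x, hxne, (Finset.mem_filter.mp hx).2⟩
  ext j
  simp only [Set.mem_setOf_eq]
  constructor
  · rintro ⟨hji, hmax⟩
    refine ⟨hji, ?_⟩
    by_contra hne
    have h1 := hmax j₀ hj₀ne
    have hij : nodeMat Z P i j = P (Z i) (Z j) := by
      simp [nodeMat, Ne.symm hji]
    have hij0 : nodeMat Z P i j₀ = P (Z i) (Z i) := by
      simp [nodeMat, Ne.symm hj₀ne, hj₀]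
    have := hdom (Z i) (Z j) hne
    rw [hij, hij0] at h1
    linarith
  · rintro ⟨hji, hsame⟩
    refine ⟨hji, fun ℓ hℓ => ?_⟩
    have hij : nodeMat Z P i j = P (Z i) (Z i) := by
      simp [nodeMat, Ne.symm hji, hsame]
    have hiℓ : nodeMat Z P i ℓ = P (Z i) (Z ℓ) := by
      simp [nodeMat, Ne.symm hℓ]
    rw [hij, hiℓ]
    rcases eq_or_ne (Z ℓ) (Z i) with h | h
    · rw [h]
    · have := hdom (Z i) (Z ℓ) h
      linarith
end

section
/- Let theta^0 = T(Z_0 P^0 Z_0^T) with Z_0 in Z_{n,k_0}, P^0 in S_{k_0, delta}, delta > 0. Let r < delta/2. Then any theta = T(Z P Z^T) with Z in Z_{n,k}, P in S_{k,delta}, and ||theta - theta^0||_∞ <= r satisfies: for every node i, the set C_i = argmax_{ℓ != i} theta_{iℓ} equals C_i^0 = argmax_{ℓ != i} theta^0_{iℓ}. In particular k = k_0 and Z equals Z_0 up to relabeling. -/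
lemma nodeMat_apply {n k : ℕ} (Z : Fin n → Fin k) (P : Matrix (Fin k) (Fin k) ℝ)
    {i j : Fin n} (h : i ≠ j) : nodeMat Z P i j = P (Z i) (Z j) := by
  simp [nodeMat, h]

lemma exists_mate {n k : ℕ} {Z : Fin n → Fin k} (hZ : IsAssign Z) (i : Fin n) :
    ∃ ℓ, ℓ ≠ i ∧ Z ℓ = Z i := by
  obtain ⟨ℓ, hℓ, hne⟩ := Finset.exists_mem_ne
    (s := Finset.univ.filter (fun j => Z j = Z i)) (by have := hZ (Z i); omega) i
  exact ⟨ℓ, hne, (Finset.mem_filter.mp hℓ).2⟩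

lemma aux_comm {n k k0 : ℕ} {δ r : ℝ} (hδ : 0 < δ) (hr : r < δ / 2)
    {P : Matrix (Fin k) (Fin k) ℝ} (hP : P ∈ Sset k δ)
    {P0 : Matrix (Fin k0) (Fin k0) ℝ} (hP0 : P0 ∈ Sset k0 δ)
    {Z : Fin n → Fin k} {Z0 : Fin n → Fin k0} (hZ : IsAssign Z)
    (hsup : ∀ i j : Fin n, i ≠ j → |nodeMat Z P i j - nodeMat Z0 P0 i j| ≤ r)
    {i j : Fin n} (hij : i ≠ j) (hzz : Z0 i = Z0 j) : Z i = Z j := by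
  by_contra h
  obtain ⟨ℓ, hℓi, hℓ⟩ := exists_mate hZ i
  have hiℓ : i ≠ ℓ := fun e => hℓi e.symm
  have h1 : nodeMat Z P i ℓ = P (Z i) (Z i) := by rw [nodeMat_apply Z P hiℓ, hℓ]
  have h2 : nodeMat Z P i j = P (Z i) (Z j) := nodeMat_apply Z P hij
  have h3 : δ + P (Z i) (Z j) < P (Z i) (Z i) := hP.2.2 _ _ (fun e => h e.symm)
  have h4 : nodeMat Z0 P0 i ℓ ≤ nodeMat Z0 P0 i j := by
    rw [nodeMat_apply Z0 P0 hiℓ, nodeMat_apply Z0 P0 hij, ← hzz]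
    by_cases hc : Z0 ℓ = Z0 i
    · rw [hc]
    · have := hP0.2.2 (Z0 i) (Z0 ℓ) hc
      linarith
  have A := abs_le.mp (hsup i ℓ hiℓ)
  have B := abs_le.mp (hsup i j hij)
  linarith [A.1, A.2, B.1, B.2]

lemma argmax_eq {n k : ℕ} {δ : ℝ} (hδ : 0 < δ)
    {P : Matrix (Fin k) (Fin k) ℝ} (hP : P ∈ Sset k δ)
    {Z : Fin n → Fin k} (hZ : IsAssign Z) (i : Fin n) :
    {j : Fin n | j ≠ i ∧ ∀ ℓ : Fin n, ℓ ≠ i → nodeMat Z P i ℓ ≤ nodeMat Z P i j}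
      = {j : Fin n | j ≠ i ∧ Z j = Z i} := by
  ext j
  simp only [Set.mem_setOf_eq]
  constructor
  · rintro ⟨hji, hmax⟩
    refine ⟨hji, ?_⟩
    by_contra hne
    obtain ⟨ℓ, hℓi, hℓ⟩ := exists_mate hZ i
    have hle := hmax ℓ hℓi
    rw [nodeMat_apply Z P (fun e => hℓi e.symm), nodeMat_apply Z P (fun e => hji e.symm),
      hℓ] at hle
    have h3 := hP.2.2 (Z i) (Z j) hne
    linarith
  · rintro ⟨hji, hzj⟩
    refine ⟨hji, fun ℓ hℓi => ?_⟩
    rw [nodeMat_apply Z P (fun e => hℓi e.symm), nodeMat_apply Z P (fun e => hji e.symm), hzj]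
    by_cases hc : Z ℓ = Z i
    · rw [hc]
    · have := hP.2.2 (Z i) (Z ℓ) hc
      linarith

/-- Identification lemma: if `θ⁰ = T(Z₀ P⁰ Z₀ᵀ)` with `P⁰ ∈ S_{k₀,δ}`, `δ > 0`, and
`θ = T(Z P Zᵀ)` with `P ∈ S_{k,δ}` satisfies `‖θ - θ⁰‖_∞ ≤ r < δ/2`, then for every
node `i` the argmax set `C_i` of `θ` equals the argmax set `C_i⁰` of `θ⁰`; in particular
`k = k₀` and `Z` equals `Z₀` up to a relabeling of communities. -/
theorem identification_lemma (n k k0 : ℕ) (δ r : ℝ) (hδ : 0 < δ) (hr : r < δ / 2)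
    (P0 : Matrix (Fin k0) (Fin k0) ℝ) (hP0 : P0 ∈ Sset k0 δ)
    (Z0 : Fin n → Fin k0) (hZ0 : IsAssign Z0)
    (P : Matrix (Fin k) (Fin k) ℝ) (hP : P ∈ Sset k δ)
    (Z : Fin n → Fin k) (hZ : IsAssign Z)
    (hsup : ∀ i j : Fin n, i ≠ j →
      |nodeMat Z P i j - nodeMat Z0 P0 i j| ≤ r) :
    (∀ i : Fin n,
      {j : Fin n | j ≠ i ∧ ∀ ℓ : Fin n, ℓ ≠ i → nodeMat Z P i ℓ ≤ nodeMat Z P i j}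
        = {j : Fin n | j ≠ i ∧ ∀ ℓ : Fin n, ℓ ≠ i → nodeMat Z0 P0 i ℓ ≤ nodeMat Z0 P0 i j})
    ∧ k = k0
    ∧ ∃ σ : Fin k ≃ Fin k0, ∀ i : Fin n, Z0 i = σ (Z i) := by
  have hsup' : ∀ i j : Fin n, i ≠ j → |nodeMat Z0 P0 i j - nodeMat Z P i j| ≤ r := by
    intro i j h
    rw [abs_sub_comm]
    exact hsup i j h
  have hcomm : ∀ i j : Fin n, Z i = Z j ↔ Z0 i = Z0 j := by
    intro i j
    by_cases hij : i = j
    · subst hij; simp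
    · exact ⟨fun h => aux_comm hδ hr hP0 hP hZ0 hsup' hij h,
        fun h => aux_comm hδ hr hP hP0 hZ hsup hij h⟩
  have hZsurj : ∀ a : Fin k, ∃ i, Z i = a := by
    intro a
    have h := hZ a
    have hpos : 0 < (Finset.univ.filter (fun i => Z i = a)).card := by omega
    obtain ⟨i, hi⟩ := Finset.card_pos.mp hpos
    exact ⟨i, (Finset.mem_filter.mp hi).2⟩
  have hZ0surj : ∀ c : Fin k0, ∃ i, Z0 i = c := by
    intro c
    have h := hZ0 c
    have hpos : 0 < (Finset.univ.filter (fun i => Z0 i = c)).card := by omega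
    obtain ⟨i, hi⟩ := Finset.card_pos.mp hpos
    exact ⟨i, (Finset.mem_filter.mp hi).2⟩
  set f : Fin k → Fin k0 := fun a => Z0 (hZsurj a).choose with hfdef
  have hf : ∀ i, f (Z i) = Z0 i := fun i => (hcomm _ i).mp (hZsurj (Z i)).choose_spec
  have hinj : Function.Injective f := by
    intro a b hab
    obtain ⟨i, hi⟩ := hZsurj a
    obtain ⟨j, hj⟩ := hZsurj b
    rw [← hi, ← hj] at hab ⊢
    rw [hf i, hf j] at hab
    exact (hcomm i j).mpr hab
  have hsurjf : Function.Surjective f := by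
    intro c
    obtain ⟨i, hi⟩ := hZ0surj c
    exact ⟨Z i, by rw [hf i, hi]⟩
  let e : Fin k ≃ Fin k0 := Equiv.ofBijective f ⟨hinj, hsurjf⟩
  refine ⟨?_, by simpa using Fintype.card_congr e, e, fun i => (hf i).symm⟩
  intro i
  rw [argmax_eq hδ hP hZ i, argmax_eq hδ hP0 hZ0 i]
  ext j
  simp only [Set.mem_setOf_eq]
  exact and_congr_right fun _ => hcomm j i
end
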